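/- arXiv:math/0406589 — 3 statements merged into one kernel-verified Lean document; each statement's English description precedes it below -/
import Mathlib

section
/- For any positive integer n, index sequence I = (i₁,…,i_k) of positive integers, and complex arguments X = (x₁,…,x_k), the nested sum S_I(n;X) = Σ_{n ≥ n₁ ≥ n₂ ≥ … ≥ n_k ≥ 1} x₁^{n₁}⋯x_k^{n_k}/(n₁^{i₁}⋯n_k^{i_k}) equals the sum over all compositions J = (j₁,…,j_p) of k of A_{J∘I}(n; J(X)), where A is the strictly-decreasing analogue A_I(n;X) = Σ_{n ≥ n₁ > … > n_k ≥ 1} x₁^{n₁}⋯x_k^{n_k}/(n₁^{i₁}⋯n_k^{i_k}). -/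
open Finset

/-- The strict multiple harmonic sum `A_I(n; X)`, where the word pairs each exponent
`i_s` with its argument `x_s`. -/
noncomputable def Asum (n : ℕ) : List (ℕ × ℂ) → ℂ
  | [] => 1
  | p :: t => ∑ m ∈ Finset.Icc 1 n, p.2 ^ m / (m : ℂ) ^ p.1 * Asum (m - 1) t

/-- The weak multiple harmonic sum `S_I(n; X)`. -/
noncomputable def Ssum (n : ℕ) : List (ℕ × ℂ) → ℂ
  | [] => 1
  | p :: t => ∑ m ∈ Finset.Icc 1 n, p.2 ^ m / (m : ℂ) ^ p.1 * Ssum m t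

/-- For a composition `J` of `k` and a word of length `k`, `(J ∘ I, J(X))`: sum the
exponents and multiply the arguments in each consecutive block. -/
def contractC {k : ℕ} (J : Composition k) (w : List (ℕ × ℂ)) : List (ℕ × ℂ) :=
  (w.splitWrtComposition J).map fun b => ((b.map Prod.fst).sum, (b.map Prod.snd).prod)

/-! ### Auxiliary machinery -/

/-- One step of forming contractions: either keep `p` separate, or merge it with the head. -/
def gctr (p : ℕ × ℂ) : List (ℕ × ℂ) → List (List (ℕ × ℂ))
  | [] => [[p]]
  | q :: s => [p :: q :: s, (p.1 + q.1, p.2 * q.2) :: s]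

/-- All contractions of a word, obtained by merging consecutive entries. -/
def ctr : List (ℕ × ℂ) → List (List (ℕ × ℂ))
  | [] => [[]]
  | p :: t => (ctr t).flatMap (gctr p)

lemma sum_map_bind {α β : Type*} (l : List α) (g : α → List β) (f : β → ℂ) :
    ((l.flatMap g).map f).sum = (l.map fun a => ((g a).map f).sum).sum := by
  induction l with
  | nil => simp
  | cons a l ih => simp [ih]

lemma finsum_listsum {α : Type*} (s : Finset ℕ) (l : List α) (F : ℕ → α → ℂ) :
    ∑ m ∈ s, (l.map (F m)).sum = (l.map fun a => ∑ m ∈ s, F m a).sum := by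
  induction l with
  | nil => simp
  | cons a l ih => simp [Finset.sum_add_distrib, ih]

lemma Asum_split (m : ℕ) (hm : 1 ≤ m) (q : ℕ × ℂ) (s : List (ℕ × ℂ)) :
    Asum m (q :: s) = Asum (m - 1) (q :: s) + q.2 ^ m / (m : ℂ) ^ q.1 * Asum (m - 1) s := by
  obtain ⟨m', rfl⟩ : ∃ m', m = m' + 1 := ⟨m - 1, by omega⟩
  rw [show m' + 1 - 1 = m' from rfl]
  show (∑ r ∈ Finset.Icc 1 (m' + 1), q.2 ^ r / (r : ℂ) ^ q.1 * Asum (r - 1) s) = _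
  rw [Finset.sum_Icc_succ_top (by omega)]
  rfl

lemma Ssum_eq_ctr (w : List (ℕ × ℂ)) : ∀ n, Ssum n w = ((ctr w).map (Asum n)).sum := by
  induction w with
  | nil => intro n; simp [Ssum, ctr, Asum]
  | cons p t ih =>
    intro n
    have key : ∀ c : List (ℕ × ℂ),
        (∑ m ∈ Finset.Icc 1 n, p.2 ^ m / (m : ℂ) ^ p.1 * Asum m c)
          = ((gctr p c).map (Asum n)).sum := by
      intro c
      cases c with
      | nil =>
        simp only [gctr, List.map_cons, List.map_nil, List.sum_cons, List.sum_nil, add_zero]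
        show _ = Asum n [p]
        simp [Asum]
      | cons q s =>
        have h1 : (∑ m ∈ Finset.Icc 1 n, p.2 ^ m / (m : ℂ) ^ p.1 * Asum m (q :: s))
            = ∑ m ∈ Finset.Icc 1 n,
              (p.2 ^ m / (m : ℂ) ^ p.1 * Asum (m - 1) (q :: s)
                + (p.2 * q.2) ^ m / (m : ℂ) ^ (p.1 + q.1) * Asum (m - 1) s) := by
          refine Finset.sum_congr rfl fun m hm => ?_
          have hm1 : 1 ≤ m := (Finset.mem_Icc.1 hm).1
          rw [Asum_split m hm1 q s, mul_add, ← mul_assoc]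
          congr 2
          rw [div_mul_div_comm, mul_pow, pow_add]
        rw [h1, Finset.sum_add_distrib]
        simp only [gctr, List.map_cons, List.map_nil, List.sum_cons, List.sum_nil, add_zero]
        rfl
    show (∑ m ∈ Finset.Icc 1 n, p.2 ^ m / (m : ℂ) ^ p.1 * Ssum m t) = _
    calc (∑ m ∈ Finset.Icc 1 n, p.2 ^ m / (m : ℂ) ^ p.1 * Ssum m t)
        = ∑ m ∈ Finset.Icc 1 n, ((ctr t).map
            (fun c => p.2 ^ m / (m : ℂ) ^ p.1 * Asum m c)).sum := by
          refine Finset.sum_congr rfl fun m _ => ?_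
          rw [ih m, ← List.sum_map_mul_left]
      _ = ((ctr t).map fun c => ∑ m ∈ Finset.Icc 1 n,
            p.2 ^ m / (m : ℂ) ^ p.1 * Asum m c).sum :=
          finsum_listsum _ _ _
      _ = ((ctr t).map fun c => ((gctr p c).map (Asum n)).sum).sum := by
          congr 1
          exact List.map_congr_left fun c _ => key c
      _ = ((ctr (p :: t)).map (Asum n)).sum := by
          rw [show ctr (p :: t) = (ctr t).flatMap (gctr p) from rfl, sum_map_bind]

/-! ### Compositions -/

lemma sum_pos_nil (l : List ℕ) (hpos : ∀ i ∈ l, 0 < i) (h : l.sum = 0) : l = [] := by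
  cases l with
  | nil => rfl
  | cons b bs =>
    exfalso
    have := hpos b (by simp)
    simp [List.sum_cons] at h
    omega

/-- Prepend a block of size 1. -/
def compCons {k : ℕ} (J : Composition k) : Composition (k + 1) :=
  ⟨1 :: J.blocks, by
    intro i hi
    rcases List.mem_cons.1 hi with rfl | h
    · exact one_pos
    · exact J.blocks_pos h, by
    simp [List.sum_cons, J.blocks_sum, Nat.add_comm]⟩

def growBlocks : List ℕ → List ℕ
  | [] => [1]
  | b :: bs => (b + 1) :: bs

/-- Increase the first block by 1. -/
def compGrow {k : ℕ} (J : Composition k) : Composition (k + 1) :=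
  ⟨growBlocks J.blocks, by
    intro i hi
    cases hb : J.blocks with
    | nil => rw [hb] at hi; simp [growBlocks] at hi; omega
    | cons b bs =>
      rw [hb] at hi
      simp only [growBlocks, List.mem_cons] at hi
      rcases hi with rfl | h
      · omega
      · exact J.blocks_pos (by rw [hb]; exact List.mem_cons_of_mem _ h), by
    have := J.blocks_sum
    cases hb : J.blocks with
    | nil => rw [hb] at this; simp at this; simp [growBlocks]; omega
    | cons b bs => rw [hb] at this; simp only [growBlocks, List.sum_cons] at *; omega⟩

def compStep {k : ℕ} : Composition k ⊕ Composition k → Composition (k + 1)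
  | .inl J => compCons J
  | .inr J => compGrow J

lemma blocks_ne_nil {k : ℕ} (hk : 0 < k) (J : Composition k) : J.blocks ≠ [] := by
  intro h
  have := J.blocks_sum
  rw [h] at this
  simp at this
  omega

lemma compStep_bijective {k : ℕ} (hk : 0 < k) :
    Function.Bijective (compStep (k := k)) := by
  constructor
  · rintro (a | a) (b | b) h
    · have hb : (compCons a).blocks = (compCons b).blocks := congrArg Composition.blocks h
      simp only [compCons, List.cons.injEq] at hb
      exact congrArg Sum.inl (Composition.ext hb.2)
    · exfalso
      have hb : (compCons a).blocks = (compGrow b).blocks := congrArg Composition.blocks h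
      obtain ⟨c, cs, hc⟩ := List.exists_cons_of_ne_nil (blocks_ne_nil hk b)
      have hcpos : 0 < c := b.blocks_pos (by rw [hc]; simp)
      simp only [compCons, compGrow, hc, growBlocks, List.cons.injEq] at hb
      omega
    · exfalso
      have hb : (compGrow a).blocks = (compCons b).blocks := congrArg Composition.blocks h
      obtain ⟨c, cs, hc⟩ := List.exists_cons_of_ne_nil (blocks_ne_nil hk a)
      have hcpos : 0 < c := a.blocks_pos (by rw [hc]; simp)
      simp only [compCons, compGrow, hc, growBlocks, List.cons.injEq] at hb
      omega
    · have hb : (compGrow a).blocks = (compGrow b).blocks := congrArg Composition.blocks h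
      obtain ⟨c, cs, hc⟩ := List.exists_cons_of_ne_nil (blocks_ne_nil hk a)
      obtain ⟨d, ds, hd⟩ := List.exists_cons_of_ne_nil (blocks_ne_nil hk b)
      simp only [compGrow, hc, hd, growBlocks, List.cons.injEq] at hb
      refine congrArg Sum.inr (Composition.ext ?_)
      rw [hc, hd, hb.2]
      congr 1
      omega
  · intro J
    obtain ⟨b, bs, hb⟩ := List.exists_cons_of_ne_nil (blocks_ne_nil (by omega) J)
    have hbpos : 0 < b := J.blocks_pos (by rw [hb]; simp)
    have hsum := J.blocks_sum
    rw [hb, List.sum_cons] at hsum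
    rcases eq_or_lt_of_le (show 1 ≤ b from hbpos) with h1 | h2
    · refine ⟨Sum.inl ⟨bs, fun hi => J.blocks_pos (by rw [hb]; exact List.mem_cons_of_mem _ hi), by omega⟩, ?_⟩
      apply Composition.ext
      simp [compStep, compCons, hb, ← h1]
    · refine ⟨Sum.inr ⟨(b - 1) :: bs, ?_, ?_⟩, ?_⟩
      · intro i hi
        rcases List.mem_cons.1 hi with rfl | h
        · omega
        · exact J.blocks_pos (by rw [hb]; exact List.mem_cons_of_mem _ h)
      · simp [List.sum_cons]; omega
      · apply Composition.ext
        simp only [compStep, compGrow, growBlocks, hb]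
        congr 1
        omega

lemma contract_compCons (p : ℕ × ℂ) (t : List (ℕ × ℂ)) (J : Composition t.length) :
    contractC (compCons J) (p :: t) = p :: contractC J t := by
  simp only [contractC, compCons, List.splitWrtComposition,
    List.splitWrtCompositionAux_cons, List.map_cons]
  simp

lemma contract_compGrow (p q : ℕ × ℂ) (t s : List (ℕ × ℂ)) (J : Composition t.length)
    (h : contractC J t = q :: s) :
    contractC (compGrow J) (p :: t) = (p.1 + q.1, p.2 * q.2) :: s := by
  cases hb : J.blocks with
  | nil =>
    exfalso
    rw [contractC, List.splitWrtComposition, hb] at h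
    simp [List.splitWrtCompositionAux] at h
  | cons b bs =>
    rw [contractC, List.splitWrtComposition, hb, List.splitWrtCompositionAux_cons,
      List.map_cons] at h
    obtain ⟨hq, hs⟩ := List.cons.injEq .. ▸ h
    rw [contractC, List.splitWrtComposition]
    have : (compGrow J).blocks = (b + 1) :: bs := by
      simp [compGrow, hb, growBlocks]
    rw [this, List.splitWrtCompositionAux_cons, List.map_cons]
    have htake : List.take (b + 1) (p :: t) = p :: List.take b t := rfl
    have hdrop : List.drop (b + 1) (p :: t) = List.drop b t := rfl
    rw [htake, hdrop, ← hq, ← hs]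
    congr 1

lemma contract_nonempty (t : List (ℕ × ℂ)) (ht : 0 < t.length) (J : Composition t.length) :
    contractC J t ≠ [] := by
  intro h
  have h2 : t.splitWrtComposition J = [] := by
    rw [contractC] at h
    exact List.map_eq_nil_iff.1 h
  have := List.length_splitWrtComposition t J
  rw [h2] at this
  simp [Composition.length] at this
  exact blocks_ne_nil ht J (List.length_eq_zero_iff.1 this.symm)

lemma comp_sum_eq_ctr (w : List (ℕ × ℂ)) (f : List (ℕ × ℂ) → ℂ) :
    (∑ J : Composition w.length, f (contractC J w)) = ((ctr w).map f).sum := by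
  induction w generalizing f with
  | nil =>
    have hc : ∀ J : Composition ([] : List (ℕ × ℂ)).length, contractC J [] = [] := by
      intro J
      have hb : J.blocks = [] := sum_pos_nil _ (fun i hi => J.blocks_pos hi) J.blocks_sum
      simp [contractC, List.splitWrtComposition, hb, List.splitWrtCompositionAux]
    rw [Finset.sum_congr rfl fun J _ => by rw [hc J]]
    rw [Finset.sum_const, Finset.card_univ, composition_card]
    simp [ctr]
  | cons p t ih =>
    cases ht : t with
    | nil =>
      subst ht
      have hc : ∀ J : Composition ([p] : List (ℕ × ℂ)).length, contractC J [p] = [p] := by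
        intro J
        have hb : J.blocks = [1] := by
          have hsum := J.blocks_sum
          simp only [List.length_cons, List.length_nil] at hsum
          cases hbl : J.blocks with
          | nil => rw [hbl] at hsum; simp at hsum
          | cons b bs =>
            rw [hbl, List.sum_cons] at hsum
            have hbpos : 0 < b := J.blocks_pos (by rw [hbl]; simp)
            have hbs : bs = [] := sum_pos_nil _
              (fun i hi => J.blocks_pos (by rw [hbl]; exact List.mem_cons_of_mem _ hi))
              (by omega)
            rw [hbs]
            congr 1
            rw [hbs, List.sum_nil] at hsum
            omega
        simp [contractC, List.splitWrtComposition, hb, List.splitWrtCompositionAux]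
      rw [Finset.sum_congr rfl fun J _ => by rw [hc J]]
      rw [Finset.sum_const, Finset.card_univ, composition_card]
      simp [ctr, gctr]
    | cons q₀ t₀ =>
      subst ht
      set t := q₀ :: t₀ with ht'
      have hk : 0 < t.length := by simp [ht']
      have hstep := Fintype.sum_bijective (compStep (k := t.length)) (compStep_bijective hk)
        (fun x => f (contractC (compStep x) (p :: t)))
        (fun J => f (contractC J (p :: t))) (fun x => rfl)
      have hsplit : (∑ x : Composition t.length ⊕ Composition t.length,
          f (contractC (compStep x) (p :: t)))
          = ∑ J : Composition t.length, (f (contractC (compCons J) (p :: t))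
              + f (contractC (compGrow J) (p :: t))) := by
        rw [Fintype.sum_sum_type, ← Finset.sum_add_distrib]
        rfl
      have hmain : (∑ J : Composition t.length, (f (contractC (compCons J) (p :: t))
              + f (contractC (compGrow J) (p :: t))))
          = ∑ J : Composition t.length, ((gctr p (contractC J t)).map f).sum := by
        refine Finset.sum_congr rfl fun J _ => ?_
        obtain ⟨q, s, hqs⟩ := List.exists_cons_of_ne_nil (contract_nonempty t hk J)
        rw [contract_compCons, contract_compGrow p q t s J hqs, hqs]
        simp [gctr]
      calc (∑ J : Composition (p :: t).length, f (contractC J (p :: t)))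
          = ∑ J : Composition t.length, ((gctr p (contractC J t)).map f).sum := by
            rw [← hmain, ← hsplit]
            exact hstep.symm
        _ = ((ctr t).map fun c => ((gctr p c).map f).sum).sum :=
            ih (fun c => ((gctr p c).map f).sum)
        _ = ((ctr (p :: t)).map f).sum := by
            rw [show ctr (p :: t) = (ctr t).flatMap (gctr p) from rfl, sum_map_bind]

theorem S_eq_sum_A (n : ℕ) (hn : 0 < n) (w : List (ℕ × ℂ)) (hw : ∀ p ∈ w, 0 < p.1) :
    Ssum n w = ∑ J : Composition w.length, Asum n (contractC J w) := by
  rw [Ssum_eq_ctr w n, comp_sum_eq_ctr w (Asum n)]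
end

section
/- Fix positive integers r and n, and let ε = e^{2πi/r}. The linear map ρ_n : E_r → ℂ defined on words by ρ_n(z_{i₁,j₁}⋯z_{i_k,j_k}) = Σ_{n ≥ n₁ > n₂ > … > n_k ≥ 1} ε^{j₁n₁}⋯ε^{j_k n_k}/(n₁^{i₁}⋯n_k^{i_k}) is an algebra homomorphism from (E_r, *) to ℂ: ρ_n(u * v) = ρ_n(u)ρ_n(v) for all u, v. -/
open Finsupp Finset

/-- A letter `z_{i,j}`: first subscript a natural number (positive in intended use),
second subscript in `ℤ/r`. -/
abbrev QLetter (r : ℕ) := ℕ × ZMod r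

/-- The Euler algebra `E_r` as a vector space: formal `ℂ`-linear combinations of words. -/
abbrev EulerAlg (r : ℕ) := List (QLetter r) →₀ ℂ

/-- `[a,b]`: add first subscripts, add second subscripts mod `r`. -/
def ladd {r : ℕ} (a b : QLetter r) : QLetter r := (a.1 + b.1, a.2 + b.2)

/-- Quasi-shuffle product of two words, inductively. -/
noncomputable def qmulW {r : ℕ} : List (QLetter r) → List (QLetter r) → EulerAlg r
  | [], w => Finsupp.single w 1
  | a :: w, [] => Finsupp.single (a :: w) 1
  | a :: w, b :: v =>
      (qmulW w (b :: v)).mapDomain (a :: ·) +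
      (qmulW (a :: w) v).mapDomain (b :: ·) +
      (qmulW w v).mapDomain (ladd a b :: ·)
  termination_by w v => w.length + v.length

/-- Bilinear extension of the quasi-shuffle product to `E_r`. -/
noncomputable def qmul {r : ℕ} (x y : EulerAlg r) : EulerAlg r :=
  x.sum fun w c => y.sum fun v d => (c * d) • qmulW w v
noncomputable def eps (r : ℕ) : ℂ := Complex.exp (2 * Real.pi * Complex.I / r)

/-- `A_w(n)`, the strict multiple harmonic sum coded by the word `w`. -/
noncomputable def Aword (r n : ℕ) : List (QLetter r) → ℂ
  | [] => 1
  | a :: t => ∑ m ∈ Finset.Icc 1 n, eps r ^ (a.2.val * m) / (m : ℂ) ^ a.1 * Aword r (m - 1) t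

/-- `S_w(n)`, the weak multiple harmonic sum coded by the word `w`. -/
noncomputable def Sword (r n : ℕ) : List (QLetter r) → ℂ
  | [] => 1
  | a :: t => ∑ m ∈ Finset.Icc 1 n, eps r ^ (a.2.val * m) / (m : ℂ) ^ a.1 * Sword r m t


/-- The evaluation map `ρ_n : E_r → ℂ`, sending a word to its multiple harmonic sum. -/
noncomputable def rho (r n : ℕ) : EulerAlg r →ₗ[ℂ] ℂ :=
  Finsupp.lsum ℂ fun w => LinearMap.toSpanSingleton ℂ ℂ (Aword r n w)

lemma eps_pow_r {r : ℕ} (hr : 0 < r) : eps r ^ r = 1 := by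
  have hr' : (r : ℂ) ≠ 0 := Nat.cast_ne_zero.mpr hr.ne'
  rw [eps, ← Complex.exp_nat_mul,
    show (r : ℂ) * (2 * Real.pi * Complex.I / r) = 2 * Real.pi * Complex.I by
      field_simp]
  exact Complex.exp_two_pi_mul_I

lemma eps_pow_mod {r : ℕ} (hr : 0 < r) (s : ℕ) : eps r ^ s = eps r ^ (s % r) := by
  conv_lhs => rw [← Nat.div_add_mod s r]
  rw [pow_add, pow_mul, eps_pow_r hr, one_pow, one_mul]

lemma eps_ladd {r : ℕ} (hr : 0 < r) (a b : QLetter r) (m : ℕ) :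
    eps r ^ ((ladd a b).2.val * m) / (m : ℂ) ^ (ladd a b).1 =
    (eps r ^ (a.2.val * m) / (m : ℂ) ^ a.1) *
      (eps r ^ (b.2.val * m) / (m : ℂ) ^ b.1) := by
  have : NeZero r := ⟨hr.ne'⟩
  have hval : eps r ^ ((a.2 + b.2).val * m) = eps r ^ ((a.2.val + b.2.val) * m) := by
    rw [eps_pow_mod hr ((a.2 + b.2).val * m), eps_pow_mod hr ((a.2.val + b.2.val) * m)]
    congr 1
    have : (a.2 + b.2).val * m ≡ (a.2.val + b.2.val) * m [MOD r] := by
      rw [ZMod.val_add]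
      exact (Nat.mod_modEq _ r).mul_right m
    exact this
  show eps r ^ ((a.2 + b.2).val * m) / (m : ℂ) ^ (a.1 + b.1) = _
  rw [hval, add_mul, pow_add, pow_add]
  ring

lemma tri (n : ℕ) (F G : ℕ → ℂ) :
    (∑ m ∈ Finset.Icc 1 n, F m) * (∑ m ∈ Finset.Icc 1 n, G m) =
      (∑ m ∈ Finset.Icc 1 n, F m * ∑ k ∈ Finset.Icc 1 (m - 1), G k) +
      (∑ m ∈ Finset.Icc 1 n, G m * ∑ k ∈ Finset.Icc 1 (m - 1), F k) +
      ∑ m ∈ Finset.Icc 1 n, F m * G m := by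
  induction n with
  | zero => simp
  | succ n ih =>
    have hin : (n + 1) ∉ Finset.Icc 1 n := by simp
    rw [show Finset.Icc 1 (n + 1) = insert (n + 1) (Finset.Icc 1 n) by
      ext k; simp [Finset.mem_Icc]; omega]
    simp only [Finset.sum_insert hin, Nat.add_sub_cancel]
    rw [add_mul, mul_add, mul_add, ih]
    ring

lemma rho_mapDomain_cons (r n : ℕ) (a : QLetter r) (x : EulerAlg r) :
    rho r n (x.mapDomain (a :: ·)) =
      ∑ m ∈ Finset.Icc 1 n,
        eps r ^ (a.2.val * m) / (m : ℂ) ^ a.1 * rho r (m - 1) x := by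
  induction x using Finsupp.induction_linear with
  | zero => simp
  | add f g hf hg =>
    rw [Finsupp.mapDomain_add, map_add, hf, hg, ← Finset.sum_add_distrib]
    exact Finset.sum_congr rfl fun m _ => by rw [map_add]; ring
  | single u c =>
    rw [Finsupp.mapDomain_single]
    simp only [rho, Finsupp.lsum_single, LinearMap.toSpanSingleton_apply, smul_eq_mul]
    show c * Aword r n (a :: u) = _
    rw [show Aword r n (a :: u) =
      ∑ m ∈ Finset.Icc 1 n, eps r ^ (a.2.val * m) / (m : ℂ) ^ a.1 * Aword r (m - 1) u
      from rfl]
    rw [Finset.mul_sum]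
    exact Finset.sum_congr rfl fun m _ => by ring

lemma rho_single (r n : ℕ) (w : List (QLetter r)) :
    rho r n (Finsupp.single w 1) = Aword r n w := by
  simp [rho, Finsupp.lsum_single, LinearMap.toSpanSingleton_apply]

theorem rho_qmulW (r : ℕ) (hr : 0 < r) :
    ∀ (w v : List (QLetter r)) (n : ℕ),
      rho r n (qmulW w v) = Aword r n w * Aword r n v
  | [], v, n => by
    rw [qmulW, rho_single]
    show _ = (1 : ℂ) * _
    rw [one_mul]
  | a :: w, [], n => by
    rw [qmulW, rho_single]
    show _ = _ * (1 : ℂ)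
    rw [mul_one]
  | a :: w, b :: v, n => by
    have IH1 := fun m => rho_qmulW r hr w (b :: v) m
    have IH2 := fun m => rho_qmulW r hr (a :: w) v m
    have IH3 := fun m => rho_qmulW r hr w v m
    rw [qmulW, map_add, map_add, rho_mapDomain_cons, rho_mapDomain_cons,
      rho_mapDomain_cons]
    simp only [IH1, IH2, IH3]
    have ea : ∀ m, Aword r m (a :: w) =
        ∑ k ∈ Finset.Icc 1 m, eps r ^ (a.2.val * k) / (k : ℂ) ^ a.1 * Aword r (k - 1) w :=
      fun _ => rfl
    have eb : ∀ m, Aword r m (b :: v) =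
        ∑ k ∈ Finset.Icc 1 m, eps r ^ (b.2.val * k) / (k : ℂ) ^ b.1 * Aword r (k - 1) v :=
      fun _ => rfl
    rw [ea n, eb n,
      tri n (fun m => eps r ^ (a.2.val * m) / (m : ℂ) ^ a.1 * Aword r (m - 1) w)
            (fun m => eps r ^ (b.2.val * m) / (m : ℂ) ^ b.1 * Aword r (m - 1) v)]
    simp only [ea, eb]
    congr 1
    · congr 1
      · exact Finset.sum_congr rfl fun m _ => by ring
      · exact Finset.sum_congr rfl fun m _ => by ring
    · exact Finset.sum_congr rfl fun m _ => by rw [eps_ladd hr]; ring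
  termination_by w v _ => w.length + v.length

theorem rho_hom (r : ℕ) (hr : 0 < r) (n : ℕ) (hn : 0 < n) (x y : EulerAlg r) :
    rho r n (qmul x y) = rho r n x * rho r n y := by
  rw [qmul, map_finsuppSum]
  simp only [map_finsuppSum, map_smul, rho_qmulW r hr, smul_eq_mul]
  have hx : rho r n x = x.sum fun w c => c * Aword r n w := by
    rw [rho, Finsupp.lsum_apply]
    exact Finsupp.sum_congr fun w _ => by
      simp [LinearMap.toSpanSingleton_apply, smul_eq_mul]
  have hy : rho r n y = y.sum fun v d => d * Aword r n v := by
    rw [rho, Finsupp.lsum_apply]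
    exact Finsupp.sum_congr fun v _ => by
      simp [LinearMap.toSpanSingleton_apply, smul_eq_mul]
  rw [hx, hy, Finsupp.sum_mul]
  refine Finsupp.sum_congr fun w _ => ?_
  rw [Finsupp.mul_sum]
  refine Finsupp.sum_congr fun v _ => ?_
  ring
end

section
/- Fix positive integers r, n and ε = e^{2πi/r}. For a word w = z_{i₁,j₁}⋯z_{i_k,j_k}, write A_w(n) = Σ_{n ≥ n₁ > … > n_k ≥ 1} ∏ ε^{j_s n_s}/n_s^{i_s} and S_w(n) = Σ_{n ≥ n₁ ≥ … ≥ n_k ≥ 1} ∏ ε^{j_s n_s}/n_s^{i_s}. Then S_w(n) = Σ_{w₁⋯w_m = R(w)} (−1)^{k−m} A_{w₁}(n)⋯A_{w_m}(n), where the sum is over decompositions of the reversed word R(w) into nonempty consecutive subwords. -/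
open Finsupp Finset

namespace SAux

noncomputable def f (r : ℕ) (a : QLetter r) (m : ℕ) : ℂ :=
  eps r ^ (a.2.val * m) / (m : ℂ) ^ a.1

noncomputable def AUp (r lb n : ℕ) : List (QLetter r) → ℂ
  | [] => 1
  | a :: t => ∑ m ∈ Finset.Icc lb n, f r a m * AUp r (m + 1) n t

noncomputable def SUp (r lb n : ℕ) : List (QLetter r) → ℂ
  | [] => 1
  | a :: t => ∑ m ∈ Finset.Icc lb n, f r a m * SUp r m n t

lemma swap_lt (F : ℕ → ℕ → ℂ) (lb n : ℕ) (hlb : 1 ≤ lb) :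
    ∑ p ∈ Icc lb n, ∑ m ∈ Icc (p + 1) n, F p m
      = ∑ m ∈ Icc lb n, ∑ p ∈ Icc lb (m - 1), F p m := by
  rw [Finset.sum_sigma', Finset.sum_sigma']
  refine Finset.sum_nbij' (fun x => ⟨x.2, x.1⟩) (fun x => ⟨x.2, x.1⟩) ?_ ?_ ?_ ?_ ?_ <;>
    simp only [Finset.mem_sigma, Finset.mem_Icc] <;> rintro ⟨a, b⟩ h <;> simp_all <;> omega

lemma swap_le (F : ℕ → ℕ → ℂ) (lb n : ℕ) :
    ∑ p ∈ Icc lb n, ∑ m ∈ Icc p n, F p m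
      = ∑ m ∈ Icc lb n, ∑ p ∈ Icc lb m, F p m := by
  rw [Finset.sum_sigma', Finset.sum_sigma']
  refine Finset.sum_nbij' (fun x => ⟨x.2, x.1⟩) (fun x => ⟨x.2, x.1⟩) ?_ ?_ ?_ ?_ ?_ <;>
    simp only [Finset.mem_sigma, Finset.mem_Icc] <;> rintro ⟨a, b⟩ h <;> simp_all <;> omega

lemma AUp_append (r n : ℕ) (a : QLetter r) :
    ∀ (v : List (QLetter r)) (lb : ℕ), 1 ≤ lb →
    AUp r lb n (v ++ [a]) = ∑ m ∈ Icc lb n, f r a m * AUp r lb (m - 1) v := by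
  intro v
  induction v with
  | nil => intro lb hlb; simp [AUp]
  | cons c v ih =>
    intro lb hlb
    simp only [List.cons_append, AUp, List.append_eq]
    have : ∀ p ∈ Icc lb n, f r c p * AUp r (p + 1) n (v ++ [a])
        = ∑ m ∈ Icc (p + 1) n, f r c p * (f r a m * AUp r (p + 1) (m - 1) v) := by
      intro p hp
      rw [ih (p + 1) (by omega), Finset.mul_sum]
    rw [Finset.sum_congr rfl this, swap_lt _ lb n hlb]
    refine Finset.sum_congr rfl fun m hm => ?_
    simp only [AUp, Finset.mul_sum]
    exact Finset.sum_congr rfl fun p hp => by ring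

lemma SUp_append (r n : ℕ) (a : QLetter r) :
    ∀ (v : List (QLetter r)) (lb : ℕ),
    SUp r lb n (v ++ [a]) = ∑ m ∈ Icc lb n, f r a m * SUp r lb m v := by
  intro v
  induction v with
  | nil => simp [SUp]
  | cons c v ih =>
    intro lb
    simp only [List.cons_append, SUp, List.append_eq]
    have : ∀ p ∈ Icc lb n, f r c p * SUp r p n (v ++ [a])
        = ∑ m ∈ Icc p n, f r c p * (f r a m * SUp r p m v) := by
      intro p hp
      rw [ih p, Finset.mul_sum]
    rw [Finset.sum_congr rfl this, swap_le _ lb n]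
    refine Finset.sum_congr rfl fun m hm => ?_
    simp only [SUp, Finset.mul_sum]
    exact Finset.sum_congr rfl fun p hp => by ring

lemma Aword_eq_AUp (r : ℕ) (w : List (QLetter r)) : ∀ n, Aword r n w = AUp r 1 n w.reverse := by
  induction w with
  | nil => intro n; simp [Aword, AUp]
  | cons a t ih =>
    intro n
    rw [List.reverse_cons, AUp_append r n a t.reverse 1 le_rfl, Aword]
    exact Finset.sum_congr rfl fun m hm => by rw [ih (m - 1)]; rfl

lemma Sword_eq_SUp (r : ℕ) (w : List (QLetter r)) : ∀ n, Sword r n w = SUp r 1 n w.reverse := by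
  induction w with
  | nil => intro n; simp [Sword, SUp]
  | cons a t ih =>
    intro n
    rw [List.reverse_cons, SUp_append r n a t.reverse 1, Sword]
    exact Finset.sum_congr rfl fun m hm => by rw [ih m]; rfl


noncomputable def XX (r n : ℕ) : List (QLetter r) → List (QLetter r) → ℂ
  | [], _ => 0
  | a :: t, w => ∑ m ∈ Icc 1 n, f r a m * AUp r (m + 1) n t * SUp r m n w

lemma prod_split (g h : ℕ → ℂ) (n : ℕ) :
    (∑ m ∈ Icc 1 n, g m) * (∑ p ∈ Icc 1 n, h p)
      = (∑ m ∈ Icc 1 n, g m * ∑ p ∈ Icc m n, h p)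
        + ∑ p ∈ Icc 1 n, h p * ∑ m ∈ Icc (p + 1) n, g m := by
  rw [Finset.sum_mul_sum]
  have key : ∀ m ∈ Icc 1 n, ∑ p ∈ Icc 1 n, g m * h p
      = g m * ∑ p ∈ Icc m n, h p + ∑ p ∈ Icc 1 (m - 1), g m * h p := by
    intro m hm
    simp only [Finset.mem_Icc] at hm
    have : Icc 1 n = Icc 1 (m - 1) ∪ Icc m n := by
      ext x; simp only [Finset.mem_union, Finset.mem_Icc]; omega
    rw [this, Finset.sum_union (by
      rw [Finset.disjoint_left]; intro x hx hx'
      simp only [Finset.mem_Icc] at hx hx'; omega)]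
    rw [Finset.mul_sum]; ring
  rw [Finset.sum_congr rfl key, Finset.sum_add_distrib]
  congr 1
  rw [← swap_lt (fun p m => g m * h p) 1 n le_rfl]
  exact Finset.sum_congr rfl fun p hp => by rw [Finset.mul_sum]; exact Finset.sum_congr rfl fun m hm => mul_comm _ _

lemma split_lemma (r n : ℕ) (a : QLetter r) (t : List (QLetter r)) :
    ∀ w : List (QLetter r),
      AUp r 1 n (a :: t) * SUp r 1 n w
        = XX r n (a :: t) w + (match w with | [] => 0 | b :: w' => XX r n (b :: a :: t) w') := by
  intro w
  match w with
  | [] => simp [SUp, XX, AUp]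
  | b :: w' =>
    show AUp r 1 n (a :: t) * SUp r 1 n (b :: w') = XX r n (a :: t) (b :: w') + XX r n (b :: a :: t) w'
    have h1 : XX r n (a :: t) (b :: w')
        = ∑ m ∈ Icc 1 n, (f r a m * AUp r (m + 1) n t) * ∑ p ∈ Icc m n, f r b p * SUp r p n w' := rfl
    have h2 : XX r n (b :: a :: t) w'
        = ∑ p ∈ Icc 1 n, (f r b p * SUp r p n w') * ∑ m ∈ Icc (p + 1) n, f r a m * AUp r (m + 1) n t := by
      show (∑ p ∈ Icc 1 n, f r b p * AUp r (p + 1) n (a :: t) * SUp r p n w') = _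
      refine Finset.sum_congr rfl fun p hp => ?_
      rw [show AUp r (p + 1) n (a :: t) = ∑ m ∈ Icc (p + 1) n, f r a m * AUp r (m + 1) n t from rfl]
      ring
    calc AUp r 1 n (a :: t) * SUp r 1 n (b :: w')
        = (∑ m ∈ Icc 1 n, f r a m * AUp r (m + 1) n t) * (∑ p ∈ Icc 1 n, f r b p * SUp r p n w') := rfl
      _ = (∑ m ∈ Icc 1 n, (f r a m * AUp r (m + 1) n t) * ∑ p ∈ Icc m n, f r b p * SUp r p n w')
          + ∑ p ∈ Icc 1 n, (f r b p * SUp r p n w') * ∑ m ∈ Icc (p + 1) n, f r a m * AUp r (m + 1) n t :=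
          prod_split _ _ n
      _ = XX r n (a :: t) (b :: w') + XX r n (b :: a :: t) w' := by rw [h1, h2]

lemma G_eq (r n : ℕ) :
    ∀ (w acc : List (QLetter r)), acc ≠ [] →
      (∑ j ∈ Finset.range (w.length + 1),
        (-1 : ℂ) ^ j * (AUp r 1 n ((w.take j).reverse ++ acc) * SUp r 1 n (w.drop j)))
        = XX r n acc w := by
  intro w
  induction w with
  | nil =>
    rintro (_ | ⟨a, t⟩) h
    · exact absurd rfl h
    · simp [XX, AUp, SUp]
  | cons b t ih =>
    rintro (_ | ⟨a, acc'⟩) h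
    · exact absurd rfl h
    · set acc := a :: acc' with hacc
      rw [Finset.sum_range_succ']
      simp only [List.length_cons]
      have e1 : ∀ j, ((b :: t).take (j + 1)).reverse ++ acc = (t.take j).reverse ++ (b :: acc) := by
        intro j; rw [List.take_succ_cons, List.reverse_cons, List.append_assoc]; rfl
      have e2 : ∀ j, (b :: t).drop (j + 1) = t.drop j := fun j => rfl
      have : (∑ j ∈ Finset.range (t.length + 1),
          (-1 : ℂ) ^ (j + 1) * (AUp r 1 n (((b :: t).take (j + 1)).reverse ++ acc) * SUp r 1 n ((b :: t).drop (j + 1))))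
          = - XX r n (b :: acc) t := by
        rw [← ih (b :: acc) (by simp)]
        rw [← Finset.sum_neg_distrib]
        refine Finset.sum_congr rfl fun j hj => ?_
        rw [e1 j, e2 j, pow_succ]
        ring
      rw [this]
      simp only [List.take_zero, List.reverse_nil, List.nil_append, List.drop_zero, pow_zero, one_mul]
      rw [hacc, split_lemma r n a acc' (b :: t)]
      ring

lemma star (r n : ℕ) (a : QLetter r) (t : List (QLetter r)) :
    ∑ j ∈ Finset.range ((a :: t).length + 1),
      (-1 : ℂ) ^ j * (Aword r n ((a :: t).take j) * Sword r n (((a :: t).drop j).reverse)) = 0 := by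
  have conv : ∀ j, Aword r n ((a :: t).take j) * Sword r n (((a :: t).drop j).reverse)
      = AUp r 1 n (((a :: t).take j).reverse) * SUp r 1 n ((a :: t).drop j) := by
    intro j
    rw [Aword_eq_AUp, Sword_eq_SUp, List.reverse_reverse]
  simp only [conv]
  rw [Finset.sum_range_succ']
  simp only [List.length_cons]
  have e1 : ∀ j, ((a :: t).take (j + 1)).reverse = (t.take j).reverse ++ [a] := by
    intro j; rw [List.take_succ_cons, List.reverse_cons]
  have key : (∑ j ∈ Finset.range (t.length + 1),
      (-1 : ℂ) ^ (j + 1) * (AUp r 1 n (((a :: t).take (j + 1)).reverse) * SUp r 1 n ((a :: t).drop (j + 1))))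
      = - XX r n [a] t := by
    rw [← G_eq r n t [a] (by simp), ← Finset.sum_neg_distrib]
    refine Finset.sum_congr rfl fun j hj => ?_
    rw [e1 j, show List.drop (j + 1) (a :: t) = List.drop j t from rfl, pow_succ]
    ring
  rw [key]
  simp only [List.take_zero, List.reverse_nil, List.drop_zero, pow_zero, one_mul]
  have : XX r n [a] t = SUp r 1 n (a :: t) := by
    show (∑ m ∈ Icc 1 n, f r a m * AUp r (m + 1) n [] * SUp r m n t) = _
    rw [show SUp r 1 n (a :: t) = ∑ m ∈ Icc 1 n, f r a m * SUp r m n t from rfl]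
    refine Finset.sum_congr rfl fun m hm => ?_
    rw [show AUp r (m + 1) n ([] : List (QLetter r)) = 1 from rfl]
    ring
  rw [show AUp r 1 n ([] : List (QLetter r)) = 1 from rfl, one_mul, this]
  ring

noncomputable def Hrec (r n : ℕ) : List (QLetter r) → ℂ
  | [] => 1
  | a :: t => ∑ i ∈ (Finset.Icc 1 (a :: t).length).attach,
      (-1 : ℂ) ^ (i.1 - 1) * Aword r n ((a :: t).take i.1) * Hrec r n ((a :: t).drop i.1)
  termination_by u => u.length
  decreasing_by
    have := i.2
    simp only [Finset.mem_Icc] at this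
    simp only [List.length_drop, List.length_cons]
    omega

lemma Hrec_cons (r n : ℕ) (a : QLetter r) (t : List (QLetter r)) :
    Hrec r n (a :: t) = ∑ i ∈ Finset.Icc 1 (t.length + 1),
      (-1 : ℂ) ^ (i - 1) * Aword r n ((a :: t).take i) * Hrec r n ((a :: t).drop i) := by
  rw [Hrec]
  rw [← Finset.sum_attach (Finset.Icc 1 (t.length + 1))
    (fun i => (-1 : ℂ) ^ (i - 1) * Aword r n ((a :: t).take i) * Hrec r n ((a :: t).drop i))]
  rfl

lemma range_to_Icc (F : ℕ → ℂ) (k : ℕ) :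
    ∑ j ∈ Finset.range k, F (j + 1) = ∑ i ∈ Finset.Icc 1 k, F i := by
  refine Finset.sum_nbij' (fun j => j + 1) (fun i => i - 1) ?_ ?_ ?_ ?_ (fun x _ => rfl) <;>
    (simp only [Finset.mem_range, Finset.mem_Icc]; intro x h; omega)

lemma Sword_eq_Hrec (r n : ℕ) : ∀ (k : ℕ) (u : List (QLetter r)), u.length ≤ k →
    Sword r n u.reverse = Hrec r n u := by
  intro k
  induction k with
  | zero =>
    rintro (_ | ⟨a, t⟩) h
    · simp [Sword, Hrec]
    · simp at h
  | succ k ih =>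
    rintro (_ | ⟨a, t⟩) h
    · simp [Sword, Hrec]
    · have hstar := star r n a t
      rw [Finset.sum_range_succ'] at hstar
      simp only [List.length_cons, List.take_zero, List.drop_zero, pow_zero, one_mul] at hstar
      rw [show Aword r n ([] : List (QLetter r)) = 1 from rfl, one_mul] at hstar
      have h2 := eq_neg_of_add_eq_zero_right hstar
      rw [← Finset.sum_neg_distrib] at h2
      have h3 : (∑ j ∈ Finset.range (t.length + 1),
          -((-1 : ℂ) ^ (j + 1) * (Aword r n ((a :: t).take (j + 1)) * Sword r n (((a :: t).drop (j + 1)).reverse))))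
          = ∑ i ∈ Finset.Icc 1 (t.length + 1),
              (-1 : ℂ) ^ (i - 1) * (Aword r n ((a :: t).take i) * Sword r n (((a :: t).drop i).reverse)) := by
        rw [← range_to_Icc (fun i => (-1 : ℂ) ^ (i - 1) *
          (Aword r n ((a :: t).take i) * Sword r n (((a :: t).drop i).reverse))) (t.length + 1)]
        refine Finset.sum_congr rfl fun j _ => ?_
        rw [Nat.add_sub_cancel, pow_succ]
        ring
      rw [h2, h3, Hrec_cons]
      refine Finset.sum_congr rfl fun i hi => ?_
      simp only [Finset.mem_Icc] at hi
      have hlen : ((a :: t).drop i).length ≤ k := by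
        simp only [List.length_drop, List.length_cons]
        simp only [List.length_cons] at h
        omega
      rw [← ih ((a :: t).drop i) hlen, mul_assoc]

def consComp (k : ℕ) (i : Fin (k + 1)) (c : Composition (k - i.1)) : Composition (k + 1) :=
  ⟨(i.1 + 1) :: c.blocks, by
    intro b hb
    rcases List.mem_cons.1 hb with h | h
    · omega
    · exact c.blocks_pos h, by
    have hs := c.blocks_sum
    have := i.isLt
    simp only [List.sum_cons, hs]
    omega⟩

lemma consComp_blocks (k : ℕ) (i : Fin (k + 1)) (c : Composition (k - i.1)) :
    (consComp k i c).blocks = (i.1 + 1) :: c.blocks := rfl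

lemma consComp_bijective (k : ℕ) :
    Function.Bijective (fun x : Σ i : Fin (k + 1), Composition (k - i.1) =>
      consComp k x.1 x.2) := by
  constructor
  · rintro ⟨i, c⟩ ⟨i', c'⟩ h
    have hb : (i.1 + 1) :: c.blocks = (i'.1 + 1) :: c'.blocks := congrArg Composition.blocks h
    injection hb with h1 h2
    have hii : i = i' := Fin.ext (by omega)
    subst hii
    have : c = c' := Composition.ext h2
    subst this
    rfl
  · rintro ⟨blocks, hpos, hsum⟩
    cases blocks with
    | nil => simp at hsum
    | cons b bs =>
      simp only [List.sum_cons] at hsum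
      have hb1 : 0 < b := hpos List.mem_cons_self
      have hble : b ≤ k + 1 := by
        have : 0 ≤ bs.sum := Nat.zero_le _
        omega
      refine ⟨⟨⟨b - 1, by omega⟩, ⟨bs, fun h => hpos (List.mem_cons_of_mem _ h), by show bs.sum = k - (b - 1); omega⟩⟩, ?_⟩
      apply Composition.ext
      show (b - 1 + 1) :: bs = b :: bs
      congr 1
      omega

lemma comp_sum_peel (k : ℕ) (F : Composition (k + 1) → ℂ) :
    ∑ J : Composition (k + 1), F J
      = ∑ i : Fin (k + 1), ∑ c : Composition (k - i.1), F (consComp k i c) := by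
  rw [← Fintype.sum_bijective _ (consComp_bijective k)
    (fun x : Σ i : Fin (k + 1), Composition (k - i.1) => F (consComp k x.1 x.2)) F (fun x => rfl)]
  rw [← Finset.univ_sigma_univ, Finset.sum_sigma]

lemma comp_zero_blocks (J : Composition 0) : J.blocks = [] := by
  have := J.blocks_sum
  cases hb : J.blocks with
  | nil => rfl
  | cons b bs =>
    rw [hb] at this
    have hbpos : 0 < b := J.blocks_pos (by rw [hb]; exact List.mem_cons_self)
    simp only [List.sum_cons] at this
    omega

lemma comp_sum (r n : ℕ) : ∀ (k : ℕ), ∀ (u : List (QLetter r)), u.length = k →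
    (∑ J : Composition k,
      (-1 : ℂ) ^ (k - J.length) * ((u.splitWrtComposition J).map (Aword r n)).prod)
      = Hrec r n u := by
  intro k
  induction k using Nat.strong_induction_on with
  | _ k ih =>
    intro u hu
    cases k with
    | zero =>
      have hu0 : u = [] := List.eq_nil_of_length_eq_zero hu
      subst hu0
      have hterm : ∀ J : Composition 0,
          (-1 : ℂ) ^ (0 - J.length) * (([].splitWrtComposition J).map (Aword r n)).prod = 1 := by
        intro J
        have hb := comp_zero_blocks J
        rw [List.splitWrtComposition, hb]
        simp [List.splitWrtCompositionAux]
      rw [Finset.sum_congr rfl fun J _ => hterm J, Finset.sum_const, Finset.card_univ,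
        composition_card]
      show ((2 : ℕ) ^ (0 - 1)) • (1 : ℂ) = Hrec r n []
      norm_num [Hrec]
    | succ k =>
      cases u with
      | nil => simp at hu
      | cons a t =>
        have ht : t.length = k := by simpa using hu
        rw [comp_sum_peel k]
        have inner : ∀ i : Fin (k + 1),
            (∑ c : Composition (k - i.1),
              (-1 : ℂ) ^ (k + 1 - (consComp k i c).length) *
                (((a :: t).splitWrtComposition (consComp k i c)).map (Aword r n)).prod)
            = (-1 : ℂ) ^ i.1 * (Aword r n ((a :: t).take (i.1 + 1)) *
                Hrec r n ((a :: t).drop (i.1 + 1))) := by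
          intro i
          have hdroplen : ((a :: t).drop (i.1 + 1)).length = k - i.1 := by
            simp only [List.length_drop, List.length_cons, ht]
            omega
          have hih := ih (k - i.1) (by omega) ((a :: t).drop (i.1 + 1)) hdroplen
          rw [← hih, Finset.mul_sum, Finset.mul_sum]
          refine Finset.sum_congr rfl fun c _ => ?_
          have hsplit : (a :: t).splitWrtComposition (consComp k i c)
              = (a :: t).take (i.1 + 1) :: ((a :: t).drop (i.1 + 1)).splitWrtComposition c := by
            rw [List.splitWrtComposition, consComp_blocks, List.splitWrtCompositionAux_cons]
            rfl
          rw [hsplit]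
          have hlen : (consComp k i c).length = c.length + 1 := by
            simp [Composition.length, consComp_blocks]
          have hcle : c.length ≤ k - i.1 := Composition.length_le c
          have hsign : k + 1 - (consComp k i c).length = i.1 + ((k - i.1) - c.length) := by
            rw [hlen]
            have := i.isLt
            omega
          rw [hsign, pow_add, List.map_cons, List.prod_cons]
          ring
        rw [Finset.sum_congr rfl fun i _ => inner i]
        rw [Fin.sum_univ_eq_sum_range (fun j => (-1 : ℂ) ^ j *
          (Aword r n ((a :: t).take (j + 1)) * Hrec r n ((a :: t).drop (j + 1)))) (k + 1)]
        have := range_to_Icc (fun i => (-1 : ℂ) ^ (i - 1) *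
          (Aword r n ((a :: t).take i) * Hrec r n ((a :: t).drop i))) (k + 1)
        rw [show (∑ j ∈ Finset.range (k + 1), (-1 : ℂ) ^ j *
            (Aword r n ((a :: t).take (j + 1)) * Hrec r n ((a :: t).drop (j + 1))))
            = ∑ j ∈ Finset.range (k + 1), (-1 : ℂ) ^ (j + 1 - 1) *
              (Aword r n ((a :: t).take (j + 1)) * Hrec r n ((a :: t).drop (j + 1))) from
          Finset.sum_congr rfl fun j _ => by rw [Nat.add_sub_cancel], this, Hrec_cons, ht]
        exact Finset.sum_congr rfl fun i _ => by ring

end SAux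

theorem S_eq_alt_prod_A (r : ℕ) (hr : 0 < r) (n : ℕ) (hn : 0 < n)
    (w : List (QLetter r)) (hpos : ∀ a ∈ w, 0 < a.1) :
    Sword r n w =
      ∑ J : Composition w.length,
        (-1 : ℂ) ^ (w.length - J.length) *
          ((w.reverse.splitWrtComposition J).map (Aword r n)).prod := by
  rw [SAux.comp_sum r n w.length w.reverse List.length_reverse]
  have h2 := SAux.Sword_eq_Hrec r n w.reverse.length w.reverse le_rfl
  rw [List.reverse_reverse] at h2
  exact h2
end
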